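/- arXiv:2012.01094 — 6 statements merged into one kernel-verified Lean document; each statement's English description precedes it below -/
import Mathlib

section
/- For a tetrahedron c in ℝ³ with faces f₁,...,f₄, let 𝐟ᵢ be the outward-oriented area vector of face fᵢ (area times unit outward normal) and let 𝐛_{fᵢ} be the barycenter of face fᵢ and 𝐛_c the barycenter of c. Then Σᵢ (𝐛_{fᵢ} − 𝐛_c) ⊗ 𝐟ᵢ = |c|·I₃, where |c| is the volume of c, ⊗ denotes the outer product of vectors, and I₃ is the 3×3 identity matrix. -/
open Matrix

noncomputable section

abbrev V3 : Type := Fin 3 → ℝ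

/-- Area vector of the triangle `(a, b, c)`: half the cross product of two edge vectors. -/
def triVec (a b c : V3) : V3 := (2:ℝ)⁻¹ • ((b - a) ⨯₃ (c - a))

/-- Barycenter of a triangle. -/
def bary3 (a b c : V3) : V3 := (3:ℝ)⁻¹ • (a + b + c)

/-- Midpoint (barycenter of an edge). -/
def mid (a b : V3) : V3 := (2:ℝ)⁻¹ • (a + b)

/-- Barycenter of a tetrahedron. -/
def ctr (a b c d : V3) : V3 := (4:ℝ)⁻¹ • (a + b + c + d)

/-- Volume of the tetrahedron with vertices `a b c d`. -/
def tvol (a b c d : V3) : ℝ := |(Matrix.of ![b - a, c - a, d - a]).det| / 6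


lemma dot0 (p0 p1 p2 p3 : V3) :
    (triVec p1 p2 p3) ⬝ᵥ (bary3 p1 p2 p3 - p0) =
      (Matrix.of ![p1 - p0, p2 - p0, p3 - p0]).det / 2 := by
  simp [triVec, bary3, dotProduct, crossProduct, Matrix.det_fin_three, Fin.sum_univ_three]
  ring

lemma dot1 (p0 p1 p2 p3 : V3) :
    (triVec p0 p2 p3) ⬝ᵥ (bary3 p0 p2 p3 - p1) =
      -((Matrix.of ![p1 - p0, p2 - p0, p3 - p0]).det / 2) := by
  simp [triVec, bary3, dotProduct, crossProduct, Matrix.det_fin_three, Fin.sum_univ_three]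
  ring

lemma dot2 (p0 p1 p2 p3 : V3) :
    (triVec p0 p1 p3) ⬝ᵥ (bary3 p0 p1 p3 - p2) =
      (Matrix.of ![p1 - p0, p2 - p0, p3 - p0]).det / 2 := by
  simp [triVec, bary3, dotProduct, crossProduct, Matrix.det_fin_three, Fin.sum_univ_three]
  ring

lemma dot3 (p0 p1 p2 p3 : V3) :
    (triVec p0 p1 p2) ⬝ᵥ (bary3 p0 p1 p2 - p3) =
      -((Matrix.of ![p1 - p0, p2 - p0, p3 - p0]).det / 2) := by
  simp [triVec, bary3, dotProduct, crossProduct, Matrix.det_fin_three, Fin.sum_univ_three]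
  ring

lemma vmv_neg (u v : V3) : vecMulVec u (-v) = -vecMulVec u v := by
  ext i j
  simp [vecMulVec_apply]

set_option maxHeartbeats 1000000 in
lemma key_id (p0 p1 p2 p3 : V3) :
    vecMulVec (bary3 p1 p2 p3 - ctr p0 p1 p2 p3) (triVec p1 p2 p3) +
    vecMulVec (bary3 p0 p2 p3 - ctr p0 p1 p2 p3) (-triVec p0 p2 p3) +
    vecMulVec (bary3 p0 p1 p3 - ctr p0 p1 p2 p3) (triVec p0 p1 p3) +
    vecMulVec (bary3 p0 p1 p2 - ctr p0 p1 p2 p3) (-triVec p0 p1 p2) =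
      ((Matrix.of ![p1 - p0, p2 - p0, p3 - p0]).det / 6) • (1 : Matrix (Fin 3) (Fin 3) ℝ) := by
  have h : ∀ a b c : V3, triVec a b c =
      ![(2:ℝ)⁻¹ * ((b 1 - a 1) * (c 2 - a 2) - (b 2 - a 2) * (c 1 - a 1)),
        (2:ℝ)⁻¹ * ((b 2 - a 2) * (c 0 - a 0) - (b 0 - a 0) * (c 2 - a 2)),
        (2:ℝ)⁻¹ * ((b 0 - a 0) * (c 1 - a 1) - (b 1 - a 1) * (c 0 - a 0))] := by
    intro a b c
    rw [triVec, cross_apply]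
    ext i; fin_cases i <;> simp
  ext i j
  fin_cases i <;> fin_cases j <;>
    simp only [h, Matrix.add_apply, Matrix.vecMulVec_apply, Matrix.smul_apply,
      Matrix.one_apply, Pi.sub_apply, Pi.neg_apply, Pi.smul_apply, Pi.add_apply,
      bary3, ctr, smul_eq_mul, Matrix.det_fin_three, Matrix.of_apply,
      Matrix.cons_val', Matrix.cons_val_zero, Matrix.cons_val_one, Matrix.head_cons,
      Matrix.empty_val', Matrix.cons_val_fin_one, Matrix.head_fin_const,
      Fin.isValue, Matrix.cons_val_two, Matrix.tail_cons, Fin.reduceFinMk, Fin.reduceEq,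
      Fin.mk_zero, Fin.mk_one] <;>
    norm_num <;> ring

/-- for a non-degenerate tetrahedron with outward-oriented face area
vectors `f0, …, f3` (face `fᵢ` opposite vertex `pᵢ`), the sum of the outer products
`(𝐛_f − 𝐛_c) ⊗ 𝐟` over the four faces equals `|c|·I₃`. -/
theorem stmt_0 (p0 p1 p2 p3 : V3)
    (hnd : (Matrix.of ![p1 - p0, p2 - p0, p3 - p0]).det ≠ 0)
    (f0 f1 f2 f3 : V3)
    (hf0 : f0 = triVec p1 p2 p3 ∨ f0 = -triVec p1 p2 p3)
    (hf1 : f1 = triVec p0 p2 p3 ∨ f1 = -triVec p0 p2 p3)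
    (hf2 : f2 = triVec p0 p1 p3 ∨ f2 = -triVec p0 p1 p3)
    (hf3 : f3 = triVec p0 p1 p2 ∨ f3 = -triVec p0 p1 p2)
    (hout0 : 0 < f0 ⬝ᵥ (bary3 p1 p2 p3 - p0))
    (hout1 : 0 < f1 ⬝ᵥ (bary3 p0 p2 p3 - p1))
    (hout2 : 0 < f2 ⬝ᵥ (bary3 p0 p1 p3 - p2))
    (hout3 : 0 < f3 ⬝ᵥ (bary3 p0 p1 p2 - p3)) :
    vecMulVec (bary3 p1 p2 p3 - ctr p0 p1 p2 p3) f0 +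
    vecMulVec (bary3 p0 p2 p3 - ctr p0 p1 p2 p3) f1 +
    vecMulVec (bary3 p0 p1 p3 - ctr p0 p1 p2 p3) f2 +
    vecMulVec (bary3 p0 p1 p2 - ctr p0 p1 p2 p3) f3 =
      tvol p0 p1 p2 p3 • (1 : Matrix (Fin 3) (Fin 3) ℝ) := by
  set D := (Matrix.of ![p1 - p0, p2 - p0, p3 - p0]).det with hDdef
  have htv : tvol p0 p1 p2 p3 = |D| / 6 := rfl
  rcases hnd.lt_or_gt with hD | hD
  · -- D < 0 : outward normals are the negated triVecs with pattern (-,+,-,+)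
    have hf0' : f0 = -triVec p1 p2 p3 := by
      rcases hf0 with h | h
      · rw [h, dot0] at hout0; linarith
      · exact h
    have hf1' : f1 = triVec p0 p2 p3 := by
      rcases hf1 with h | h
      · exact h
      · rw [h, neg_dotProduct, dot1] at hout1; linarith
    have hf2' : f2 = -triVec p0 p1 p3 := by
      rcases hf2 with h | h
      · rw [h, dot2] at hout2; linarith
      · exact h
    have hf3' : f3 = triVec p0 p1 p2 := by
      rcases hf3 with h | h
      · exact h
      · rw [h, neg_dotProduct, dot3] at hout3; linarith
    rw [hf0', hf1', hf2', hf3', htv, abs_of_neg hD]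
    have hk := key_id p0 p1 p2 p3
    rw [vmv_neg, vmv_neg]
    rw [vmv_neg, vmv_neg] at hk
    have : vecMulVec (bary3 p1 p2 p3 - ctr p0 p1 p2 p3) (triVec p1 p2 p3) -
        vecMulVec (bary3 p0 p2 p3 - ctr p0 p1 p2 p3) (triVec p0 p2 p3) +
        vecMulVec (bary3 p0 p1 p3 - ctr p0 p1 p2 p3) (triVec p0 p1 p3) -
        vecMulVec (bary3 p0 p1 p2 - ctr p0 p1 p2 p3) (triVec p0 p1 p2) =
        (D / 6) • (1 : Matrix (Fin 3) (Fin 3) ℝ) := by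
      rw [← hk]; abel
    have hgoal : -(vecMulVec (bary3 p1 p2 p3 - ctr p0 p1 p2 p3) (triVec p1 p2 p3)) +
        vecMulVec (bary3 p0 p2 p3 - ctr p0 p1 p2 p3) (triVec p0 p2 p3) +
        -(vecMulVec (bary3 p0 p1 p3 - ctr p0 p1 p2 p3) (triVec p0 p1 p3)) +
        vecMulVec (bary3 p0 p1 p2 - ctr p0 p1 p2 p3) (triVec p0 p1 p2) =
        -((D / 6) • (1 : Matrix (Fin 3) (Fin 3) ℝ)) := by
      rw [← this]; abel
    rw [hgoal, ← neg_smul, neg_div]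
  · -- 0 < D : outward normals have pattern (+,-,+,-)
    have hf0' : f0 = triVec p1 p2 p3 := by
      rcases hf0 with h | h
      · exact h
      · rw [h, neg_dotProduct, dot0] at hout0; linarith
    have hf1' : f1 = -triVec p0 p2 p3 := by
      rcases hf1 with h | h
      · rw [h, dot1] at hout1; linarith
      · exact h
    have hf2' : f2 = triVec p0 p1 p3 := by
      rcases hf2 with h | h
      · exact h
      · rw [h, neg_dotProduct, dot2] at hout2; linarith
    have hf3' : f3 = -triVec p0 p1 p2 := by
      rcases hf3 with h | h
      · rw [h, dot3] at hout3; linarith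
      · exact h
    rw [hf0', hf1', hf2', hf3', htv, abs_of_pos hD]
    exact key_id p0 p1 p2 p3
end
end

section
/- Let f be a non-degenerate planar polygon in ℝ³ with unit normal 𝐧_f, area |f|, and edges e with edge vectors 𝐞 (oriented consistently with 𝐧_f via the right-hand rule) and midpoints/barycenters 𝐛_e. Then for every constant vector 𝐮 ∈ ℝ³ and every point 𝐩 ∈ ℝ³: |f|·(𝐮 × 𝐧_f) = Σ_{e ∈ E(f)} (𝐮 · 𝐞)·(𝐛_e − 𝐩). -/
open Matrix

noncomputable section

/-- BAC-CAB identity. -/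
lemma bac_cab (u a b : V3) : u ⨯₃ (a ⨯₃ b) = (u ⬝ᵥ b) • a - (u ⬝ᵥ a) • b := by
  ext i
  fin_cases i <;>
    simp [crossProduct, dotProduct, Fin.sum_univ_three] <;> ring

/-- for a planar polygon with vertices `p 0, …, p (k-1)` (cyclically
ordered, consistently with the unit normal `nf` by the right-hand rule, so that its
vector area `½ Σᵢ pᵢ × pᵢ₊₁` equals `A • nf` with `A = |f| ≥ 0`), for every constant
vector `u` and every point `q`:  `|f|·(u × nf) = Σ_{e} (u ⋅ 𝐞)·(𝐛_e − q)`. -/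
theorem stmt_1 (k : ℕ) [NeZero k] (hk : 3 ≤ k) (p : Fin k → V3) (nf : V3) (A : ℝ)
    (hunit : nf ⬝ᵥ nf = 1)
    (hplanar : ∀ i : Fin k, (p i - p 0) ⬝ᵥ nf = 0)
    (hA : 0 ≤ A)
    (harea : (2:ℝ)⁻¹ • (∑ i : Fin k, (p i) ⨯₃ (p (i + 1))) = A • nf)
    (u q : V3) :
    A • (u ⨯₃ nf) =
      ∑ i : Fin k, (u ⬝ᵥ (p (i + 1) - p i)) • (mid (p i) (p (i + 1)) - q) := by
  have hshift : ∀ g : Fin k → V3, ∑ i : Fin k, g (i + 1) = ∑ i : Fin k, g i := by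
    intro g
    exact Fintype.sum_equiv (Equiv.addRight (1 : Fin k)) (fun i => g (i + 1)) g
      (fun x => rfl)
  -- LHS computation
  have hL : A • (u ⨯₃ nf)
      = (2:ℝ)⁻¹ • ∑ i : Fin k, ((u ⬝ᵥ p (i + 1)) • p i - (u ⬝ᵥ p i) • p (i + 1)) := by
    have h1 : A • (u ⨯₃ nf) = u ⨯₃ (A • nf) := (LinearMap.map_smul (crossProduct u) A nf).symm
    rw [h1, ← harea, LinearMap.map_smul, map_sum]
    congr 1
    exact Finset.sum_congr rfl (fun i _ => bac_cab u (p i) (p (i + 1)))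
  rw [hL]
  -- expand each RHS term
  have key : ∀ i : Fin k, (u ⬝ᵥ (p (i + 1) - p i)) • (mid (p i) (p (i + 1)) - q)
      = (2:ℝ)⁻¹ • ((u ⬝ᵥ p (i + 1)) • p i - (u ⬝ᵥ p i) • p (i + 1))
        + ((2:ℝ)⁻¹ • ((u ⬝ᵥ p (i + 1)) • p (i + 1)) - (2:ℝ)⁻¹ • ((u ⬝ᵥ p i) • p i))
        + ((u ⬝ᵥ p i) • q - (u ⬝ᵥ p (i + 1)) • q) := by
    intro i
    ext j
    simp [mid, dotProduct_sub]
    ring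
  rw [Finset.sum_congr rfl (fun i _ => key i)]
  simp only [Finset.sum_add_distrib, Finset.sum_sub_distrib]
  rw [hshift (fun i => (2:ℝ)⁻¹ • ((u ⬝ᵥ p (i)) • p (i))),
    hshift (fun i => (u ⬝ᵥ p i) • q)]
  simp [Finset.smul_sum, smul_sub]
end
end

section
/- For a tetrahedron c with barycenter 𝐛_c, edges e ∈ E(c), and for each edge e with the two incident faces f_i, f_j of c (oriented to induce opposite orientations on e), define the dual face vector 𝐟̃_e|c := ½( (𝐛_{f_i} − 𝐛_c) × (𝐛_e − 𝐛_c) − (𝐛_{f_j} − 𝐛_c) × (𝐛_e − 𝐛_c) ). Then Σ_{e ∈ E(c)} 𝐟̃_e|c ⊗ 𝐞 = |c|·I₃. -/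
open Matrix

noncomputable section

/-- Restricted barycentric dual face vector of the edge `(a,b)` of the tetrahedron
`{a,b,x,y}`, with the two incident faces `(a,b,x)` and `(a,b,y)` taken in this order:
`½((𝐛_{f_i} − 𝐛_c) × (𝐛_e − 𝐛_c) − (𝐛_{f_j} − 𝐛_c) × (𝐛_e − 𝐛_c))`. -/
def dualF (a b x y : V3) : V3 :=
  (2:ℝ)⁻¹ • ((bary3 a b x - ctr a b x y) ⨯₃ (mid a b - ctr a b x y)
           - (bary3 a b y - ctr a b x y) ⨯₃ (mid a b - ctr a b x y))

lemma vecMulVec_smul_left (s : ℝ) (v w : V3) :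
    vecMulVec (s • v) w = s • vecMulVec v w := by
  ext i j
  simp [vecMulVec_apply, mul_assoc]

lemma sign_aux {s D : ℝ} (hs : s = 1 ∨ s = -1) (h : 0 < s * (-D / 12)) :
    s = -(if 0 < D then (1:ℝ) else -1) := by
  rcases hs with rfl | rfl
  · rw [if_neg (by intro hp; linarith)]; norm_num
  · rw [if_pos (by linarith)]

lemma sign_aux' {s D : ℝ} (hs : s = 1 ∨ s = -1) (h : 0 < s * (D / 12)) :
    s = (if 0 < D then (1:ℝ) else -1) := by
  rcases hs with rfl | rfl
  · rw [if_pos (by linarith)]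
  · rw [if_neg (by intro hp; linarith)]

set_option maxHeartbeats 3000000 in
lemma key (p0 p1 p2 p3 : V3) :
    (-1:ℝ) • vecMulVec (dualF p0 p1 p2 p3) (p1 - p0) +
    (1:ℝ) • vecMulVec (dualF p0 p2 p1 p3) (p2 - p0) +
    (-1:ℝ) • vecMulVec (dualF p0 p3 p1 p2) (p3 - p0) +
    (-1:ℝ) • vecMulVec (dualF p1 p2 p0 p3) (p2 - p1) +
    (1:ℝ) • vecMulVec (dualF p1 p3 p0 p2) (p3 - p1) +
    (-1:ℝ) • vecMulVec (dualF p2 p3 p0 p1) (p3 - p2) =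
      ((Matrix.of ![p1 - p0, p2 - p0, p3 - p0]).det / 6) • (1 : Matrix (Fin 3) (Fin 3) ℝ) := by
  ext i j
  fin_cases i <;> fin_cases j <;>
    simp only [Matrix.add_apply, Matrix.smul_apply, vecMulVec_apply] <;>
    simp [dualF, bary3, mid, ctr, cross_apply, det_fin_three, vecMulVec_apply,
      Matrix.one_apply, smul_eq_mul] <;>
    ring

set_option maxHeartbeats 1600000 in
lemma dots (p0 p1 p2 p3 : V3) :
    dualF p0 p1 p2 p3 ⬝ᵥ (p1 - p0) = -(Matrix.of ![p1 - p0, p2 - p0, p3 - p0]).det / 12 ∧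
    dualF p0 p2 p1 p3 ⬝ᵥ (p2 - p0) = (Matrix.of ![p1 - p0, p2 - p0, p3 - p0]).det / 12 ∧
    dualF p0 p3 p1 p2 ⬝ᵥ (p3 - p0) = -(Matrix.of ![p1 - p0, p2 - p0, p3 - p0]).det / 12 ∧
    dualF p1 p2 p0 p3 ⬝ᵥ (p2 - p1) = -(Matrix.of ![p1 - p0, p2 - p0, p3 - p0]).det / 12 ∧
    dualF p1 p3 p0 p2 ⬝ᵥ (p3 - p1) = (Matrix.of ![p1 - p0, p2 - p0, p3 - p0]).det / 12 ∧
    dualF p2 p3 p0 p1 ⬝ᵥ (p3 - p2) = -(Matrix.of ![p1 - p0, p2 - p0, p3 - p0]).det / 12 := by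
  refine ⟨?_, ?_, ?_, ?_, ?_, ?_⟩ <;>
    simp only [dualF, bary3, mid, ctr, cross_apply, dotProduct, Fin.sum_univ_three,
      det_fin_three, Matrix.of_apply, Pi.sub_apply, Pi.add_apply, Pi.smul_apply,
      smul_eq_mul, Matrix.cons_val_zero, Matrix.cons_val_one, Matrix.head_cons,
      Matrix.cons_val_two, Matrix.tail_cons] <;>
    ring

/-- for a non-degenerate tetrahedron, summing over its six edges the
outer product of the (consistently oriented, i.e. `𝐟̃ ⋅ 𝐞 > 0` by the right-hand rule)
restricted dual face vector with the edge vector gives `|c|·I₃`.  The signs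
`s₁, …, s₆ ∈ {±1}` absorb the orientation choices of the dual faces. -/
theorem stmt_2 (p0 p1 p2 p3 : V3)
    (hnd : (Matrix.of ![p1 - p0, p2 - p0, p3 - p0]).det ≠ 0)
    (s1 s2 s3 s4 s5 s6 : ℝ)
    (hs1 : s1 = 1 ∨ s1 = -1) (hs2 : s2 = 1 ∨ s2 = -1) (hs3 : s3 = 1 ∨ s3 = -1)
    (hs4 : s4 = 1 ∨ s4 = -1) (hs5 : s5 = 1 ∨ s5 = -1) (hs6 : s6 = 1 ∨ s6 = -1)
    (ho1 : 0 < (s1 • dualF p0 p1 p2 p3) ⬝ᵥ (p1 - p0))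
    (ho2 : 0 < (s2 • dualF p0 p2 p1 p3) ⬝ᵥ (p2 - p0))
    (ho3 : 0 < (s3 • dualF p0 p3 p1 p2) ⬝ᵥ (p3 - p0))
    (ho4 : 0 < (s4 • dualF p1 p2 p0 p3) ⬝ᵥ (p2 - p1))
    (ho5 : 0 < (s5 • dualF p1 p3 p0 p2) ⬝ᵥ (p3 - p1))
    (ho6 : 0 < (s6 • dualF p2 p3 p0 p1) ⬝ᵥ (p3 - p2)) :
    vecMulVec (s1 • dualF p0 p1 p2 p3) (p1 - p0) +
    vecMulVec (s2 • dualF p0 p2 p1 p3) (p2 - p0) +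
    vecMulVec (s3 • dualF p0 p3 p1 p2) (p3 - p0) +
    vecMulVec (s4 • dualF p1 p2 p0 p3) (p2 - p1) +
    vecMulVec (s5 • dualF p1 p3 p0 p2) (p3 - p1) +
    vecMulVec (s6 • dualF p2 p3 p0 p1) (p3 - p2) =
      tvol p0 p1 p2 p3 • (1 : Matrix (Fin 3) (Fin 3) ℝ) := by
  obtain ⟨d1, d2, d3, d4, d5, d6⟩ := dots p0 p1 p2 p3
  rw [smul_dotProduct, d1, smul_eq_mul] at ho1
  rw [smul_dotProduct, d2, smul_eq_mul] at ho2
  rw [smul_dotProduct, d3, smul_eq_mul] at ho3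
  rw [smul_dotProduct, d4, smul_eq_mul] at ho4
  rw [smul_dotProduct, d5, smul_eq_mul] at ho5
  rw [smul_dotProduct, d6, smul_eq_mul] at ho6
  have e1 := sign_aux hs1 ho1
  have e2 := sign_aux' hs2 ho2
  have e3 := sign_aux hs3 ho3
  have e4 := sign_aux hs4 ho4
  have e5 := sign_aux' hs5 ho5
  have e6 := sign_aux hs6 ho6
  set σ : ℝ := if 0 < (Matrix.of ![p1 - p0, p2 - p0, p3 - p0]).det then (1:ℝ) else -1 with hσ
  have hσD : σ * (Matrix.of ![p1 - p0, p2 - p0, p3 - p0]).det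
      = |(Matrix.of ![p1 - p0, p2 - p0, p3 - p0]).det| := by
    rcases lt_trichotomy (Matrix.of ![p1 - p0, p2 - p0, p3 - p0]).det 0 with h | h | h
    · rw [hσ, if_neg (by intro hp; linarith), abs_of_neg h]; ring
    · exact absurd h hnd
    · rw [hσ, if_pos h, abs_of_pos h]; ring
  have hk := key p0 p1 p2 p3
  have hL :
      vecMulVec (s1 • dualF p0 p1 p2 p3) (p1 - p0) +
      vecMulVec (s2 • dualF p0 p2 p1 p3) (p2 - p0) +
      vecMulVec (s3 • dualF p0 p3 p1 p2) (p3 - p0) +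
      vecMulVec (s4 • dualF p1 p2 p0 p3) (p2 - p1) +
      vecMulVec (s5 • dualF p1 p3 p0 p2) (p3 - p1) +
      vecMulVec (s6 • dualF p2 p3 p0 p1) (p3 - p2) =
      σ • ((-1:ℝ) • vecMulVec (dualF p0 p1 p2 p3) (p1 - p0) +
        (1:ℝ) • vecMulVec (dualF p0 p2 p1 p3) (p2 - p0) +
        (-1:ℝ) • vecMulVec (dualF p0 p3 p1 p2) (p3 - p0) +
        (-1:ℝ) • vecMulVec (dualF p1 p2 p0 p3) (p2 - p1) +
        (1:ℝ) • vecMulVec (dualF p1 p3 p0 p2) (p3 - p1) +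
        (-1:ℝ) • vecMulVec (dualF p2 p3 p0 p1) (p3 - p2)) := by
    rw [e1, e2, e3, e4, e5, e6]
    simp only [vecMulVec_smul_left]
    module
  rw [hL, hk, smul_smul, tvol]
  congr 1
  rw [← hσD]
  ring
end
end

section
/- Let c be a tetrahedron and n a vertex of c. For each edge eᵢ through n (i = 1,2,3), the identity rᵢ·𝐟ᵢ/6 = 𝐟̃_{eᵢ}|c + 𝐬_{n,eᵢ}|c holds, where 𝐟ᵢ is the face vector of the face opposite to eᵢ at n, rᵢ its orientation sign, 𝐟̃_{eᵢ}|c is the restricted barycentric dual face vector of eᵢ in c, and 𝐬_{n,eᵢ}|c is the sum of the area vectors of the two triangles with vertices {𝐛_{eᵢ}, 𝐛_{f}, p_{n,eᵢ}} for the two faces f of c containing eᵢ, with p_{n,eᵢ} := (3/4)n + (1/4)n₁ (n₁ the other endpoint of eᵢ) and orientations induced oppositely to 𝐟̃_{eᵢ}|c along shared edges. -/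
open Matrix

noncomputable section

set_option maxHeartbeats 2000000 in
private lemma key_s12 (n p1 p2 p3 : V3) :
    dualF n p1 p2 p3 +
      (triVec (mid n p1) (bary3 n p1 p2) (((3:ℝ)/4) • n + (4:ℝ)⁻¹ • p1)
       - triVec (mid n p1) (bary3 n p1 p3) (((3:ℝ)/4) • n + (4:ℝ)⁻¹ • p1))
    = (-(6:ℝ)⁻¹) • triVec n p2 p3 := by
  funext i
  fin_cases i <;>
  · simp only [dualF, triVec, bary3, mid, ctr, cross_apply, Pi.add_apply, Pi.sub_apply,
      Pi.smul_apply, smul_eq_mul, Pi.neg_apply, neg_mul,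
      Matrix.cons_val_zero, Matrix.cons_val_one, Matrix.head_cons,
      Matrix.cons_val_two, Matrix.tail_cons, Fin.isValue]
    simp
    ring

set_option maxHeartbeats 1000000 in
private lemma dotD (n p1 p2 p3 : V3) :
    dualF n p1 p2 p3 ⬝ᵥ (p1 - n) = -(Matrix.of ![p1 - n, p2 - n, p3 - n]).det / 12 := by
  simp only [dualF, triVec, bary3, mid, ctr, cross_apply, dotProduct, Fin.sum_univ_three,
    Matrix.det_fin_three, Matrix.of_apply, Pi.add_apply, Pi.sub_apply,
    Pi.smul_apply, smul_eq_mul, Pi.neg_apply,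
    Matrix.cons_val_zero, Matrix.cons_val_one, Matrix.head_cons,
    Matrix.cons_val_two, Matrix.tail_cons, Fin.isValue]
  ring

set_option maxHeartbeats 1000000 in
private lemma dotF (n p1 p2 p3 : V3) :
    triVec n p2 p3 ⬝ᵥ (p1 - n) = (Matrix.of ![p1 - n, p2 - n, p3 - n]).det / 2 := by
  simp only [triVec, cross_apply, dotProduct, Fin.sum_univ_three,
    Matrix.det_fin_three, Matrix.of_apply, Pi.add_apply, Pi.sub_apply,
    Pi.smul_apply, smul_eq_mul, Pi.neg_apply,
    Matrix.cons_val_zero, Matrix.cons_val_one, Matrix.head_cons,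
    Matrix.cons_val_two, Matrix.tail_cons, Fin.isValue]
  ring

/-- for a non-degenerate tetrahedron with vertex `n` and opposite
vertices `p1 p2 p3`, take the edge `e` through `n` towards `p1`, the face `f` opposite
to it at `n` (face `(n,p2,p3)`, either orientation) with its sign `r ∈ {±1}`,
`r (f ⋅ e) > 0`.  The restricted dual face vector `𝐟̃_e|c = σ • dualF` is oriented
consistently with `e` (`𝐟̃_e|c ⋅ e > 0`, `σ ∈ {±1}`), and the boundary term
`𝐬_{n,e}|c = σ • (t₁ − t₂)` is the sum of the area vectors of the two triangles
`(𝐛_e, 𝐛_f, p_{n,e})`, `p_{n,e} = (3/4)n + (1/4)p1`, oriented oppositely to `𝐟̃_e|c`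
along their shared edges.  Then `r·𝐟/6 = 𝐟̃_e|c + 𝐬_{n,e}|c`. -/
theorem stmt_12 (n p1 p2 p3 : V3)
    (hnd : (Matrix.of ![p1 - n, p2 - n, p3 - n]).det ≠ 0)
    (e f : V3) (r σ : ℝ)
    (he : e = p1 - n ∨ e = n - p1)
    (hf : f = triVec n p2 p3 ∨ f = -triVec n p2 p3)
    (hr : r = 1 ∨ r = -1)
    (hre : 0 < r * (f ⬝ᵥ e))
    (hσ : σ = 1 ∨ σ = -1)
    (hft : 0 < (σ • dualF n p1 p2 p3) ⬝ᵥ e) :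
    (r / 6) • f =
      σ • dualF n p1 p2 p3 +
      σ • (triVec (mid n p1) (bary3 n p1 p2) (((3:ℝ)/4) • n + (4:ℝ)⁻¹ • p1)
         - triVec (mid n p1) (bary3 n p1 p3) (((3:ℝ)/4) • n + (4:ℝ)⁻¹ • p1)) := by
  rw [← smul_add, key_s12 n p1 p2 p3]
  set d := (Matrix.of ![p1 - n, p2 - n, p3 - n]).det with hdd
  rcases he with rfl | rfl <;> rcases hf with rfl | rfl <;> rcases hr with rfl | rfl <;>
      rcases hσ with rfl | rfl <;>
    simp only [← neg_sub p1 n, dotProduct_neg, neg_dotProduct, smul_dotProduct,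
      smul_eq_mul, dotD, dotF, ← hdd, one_smul, neg_smul, one_mul, neg_mul, neg_neg,
      smul_smul] at hre hft ⊢ <;>
    first
      | (exfalso; rcases lt_or_gt_of_ne hnd with h | h <;> nlinarith)
      | (match_scalars <;> norm_num)
end
end

section
/- Let c be a tetrahedron with vertex n. With 𝐞ᵢ the edge vectors of the three edges through n, 𝐟̃_{eᵢ}|c the restricted dual face vectors, and 𝐬_{n,eᵢ}|c the boundary correction vectors defined via p_{n,eᵢ} = (3/4)n + (1/4)n₁, the following reconstruction formula holds: Σ_{i=1}^{3} (𝐞ᵢ/2) ⊗ (𝐟̃_{eᵢ}|c + 𝐬_{n,eᵢ}|c) = (|c|/4)·I₃. -/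
open Matrix

noncomputable section

/-- Boundary correction vector `𝐬_{n,e}|c` for the edge `(a,b)` of the tetrahedron
`{a,b,x,y}` at the vertex `a`: sum of the area vectors of the two triangles
`(𝐛_e, 𝐛_f, p_{a,e})` with `p_{a,e} = (3/4)a + (1/4)b`, faces in the order `x, y`. -/
def sVec (a b x y : V3) : V3 :=
  triVec (mid a b) (bary3 a b x) (((3:ℝ)/4) • a + (4:ℝ)⁻¹ • b)
    - triVec (mid a b) (bary3 a b y) (((3:ℝ)/4) • a + (4:ℝ)⁻¹ • b)

set_option maxHeartbeats 1600000 in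
/-- The combined vector `dualF + sVec` has a simple closed form. -/
lemma dualF_add_sVec (a b x y : V3) :
    dualF a b x y + sVec a b x y = (-(12:ℝ)⁻¹) • ((x - a) ⨯₃ (y - a)) := by
  funext j
  fin_cases j <;>
    (simp [dualF, sVec, triVec, bary3, ctr, mid, crossProduct]; ring)

lemma dualF_dot₁ (n p1 p2 p3 : V3) :
    dualF n p1 p2 p3 ⬝ᵥ (p1 - n) = -((Matrix.of ![p1 - n, p2 - n, p3 - n]).det / 12) := by
  simp [dualF, bary3, ctr, mid, dotProduct, Fin.sum_univ_three, crossProduct, det_fin_three]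
  ring

lemma dualF_dot₂ (n p1 p2 p3 : V3) :
    dualF n p2 p1 p3 ⬝ᵥ (p2 - n) = (Matrix.of ![p1 - n, p2 - n, p3 - n]).det / 12 := by
  simp [dualF, bary3, ctr, mid, dotProduct, Fin.sum_univ_three, crossProduct, det_fin_three]
  ring

lemma dualF_dot₃ (n p1 p2 p3 : V3) :
    dualF n p3 p1 p2 ⬝ᵥ (p3 - n) = -((Matrix.of ![p1 - n, p2 - n, p3 - n]).det / 12) := by
  simp [dualF, bary3, ctr, mid, dotProduct, Fin.sum_univ_three, crossProduct, det_fin_three]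
  ring

/-- The core polynomial identity, with signs `(-1, 1, -1)`. -/
lemma key_identity (n p1 p2 p3 : V3) :
    vecMulVec ((2:ℝ)⁻¹ • (p1 - n)) (((-1:ℝ) * -(12:ℝ)⁻¹) • ((p2 - n) ⨯₃ (p3 - n))) +
    vecMulVec ((2:ℝ)⁻¹ • (p2 - n)) (((1:ℝ) * -(12:ℝ)⁻¹) • ((p1 - n) ⨯₃ (p3 - n))) +
    vecMulVec ((2:ℝ)⁻¹ • (p3 - n)) (((-1:ℝ) * -(12:ℝ)⁻¹) • ((p1 - n) ⨯₃ (p2 - n))) =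
      ((Matrix.of ![p1 - n, p2 - n, p3 - n]).det / 6 / 4) • (1 : Matrix (Fin 3) (Fin 3) ℝ) := by
  ext i j
  fin_cases i <;> fin_cases j <;>
    (simp [vecMulVec_apply, crossProduct, Matrix.one_apply, det_fin_three]; ring)

/-- for a non-degenerate tetrahedron with vertex `n` and opposite
vertices `p1 p2 p3`, with `𝐞ᵢ = pᵢ − n` the edge vectors of the edges through `n`,
`𝐟̃_{eᵢ}|c = σᵢ • dualF` the restricted dual face vectors oriented consistently with
`𝐞ᵢ` (`σᵢ ∈ {±1}`, `𝐟̃_{eᵢ}|c ⋅ 𝐞ᵢ > 0`), and `𝐬_{n,eᵢ}|c = σᵢ • sVec` the boundary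
correction vectors, one has `Σᵢ (𝐞ᵢ/2) ⊗ (𝐟̃_{eᵢ}|c + 𝐬_{n,eᵢ}|c) = (|c|/4)·I₃`. -/
theorem stmt_13 (n p1 p2 p3 : V3)
    (hnd : (Matrix.of ![p1 - n, p2 - n, p3 - n]).det ≠ 0)
    (σ1 σ2 σ3 : ℝ)
    (hσ1 : σ1 = 1 ∨ σ1 = -1) (hσ2 : σ2 = 1 ∨ σ2 = -1) (hσ3 : σ3 = 1 ∨ σ3 = -1)
    (h1 : 0 < (σ1 • dualF n p1 p2 p3) ⬝ᵥ (p1 - n))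
    (h2 : 0 < (σ2 • dualF n p2 p1 p3) ⬝ᵥ (p2 - n))
    (h3 : 0 < (σ3 • dualF n p3 p1 p2) ⬝ᵥ (p3 - n)) :
    vecMulVec ((2:ℝ)⁻¹ • (p1 - n)) (σ1 • dualF n p1 p2 p3 + σ1 • sVec n p1 p2 p3) +
    vecMulVec ((2:ℝ)⁻¹ • (p2 - n)) (σ2 • dualF n p2 p1 p3 + σ2 • sVec n p2 p1 p3) +
    vecMulVec ((2:ℝ)⁻¹ • (p3 - n)) (σ3 • dualF n p3 p1 p2 + σ3 • sVec n p3 p1 p2) =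
      (tvol n p1 p2 p3 / 4) • (1 : Matrix (Fin 3) (Fin 3) ℝ) := by
  set d := (Matrix.of ![p1 - n, p2 - n, p3 - n]).det with hdd
  rw [smul_dotProduct, dualF_dot₁, ← hdd] at h1
  rw [smul_dotProduct, dualF_dot₂, ← hdd] at h2
  rw [smul_dotProduct, dualF_dot₃, ← hdd] at h3
  simp only [smul_eq_mul] at h1 h2 h3
  have smul_vmv : ∀ (a : V3) (r : ℝ) (v : V3), vecMulVec a (r • v) = r • vecMulVec a v := by
    intro a r v; ext i j; simp [vecMulVec_apply]; ring
  have key := key_identity n p1 p2 p3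
  rw [← hdd] at key
  have goal_eq : ∀ t1 t2 t3 : ℝ,
      vecMulVec ((2:ℝ)⁻¹ • (p1 - n)) (t1 • dualF n p1 p2 p3 + t1 • sVec n p1 p2 p3) +
      vecMulVec ((2:ℝ)⁻¹ • (p2 - n)) (t2 • dualF n p2 p1 p3 + t2 • sVec n p2 p1 p3) +
      vecMulVec ((2:ℝ)⁻¹ • (p3 - n)) (t3 • dualF n p3 p1 p2 + t3 • sVec n p3 p1 p2) =
      vecMulVec ((2:ℝ)⁻¹ • (p1 - n)) ((t1 * -(12:ℝ)⁻¹) • ((p2 - n) ⨯₃ (p3 - n))) +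
      vecMulVec ((2:ℝ)⁻¹ • (p2 - n)) ((t2 * -(12:ℝ)⁻¹) • ((p1 - n) ⨯₃ (p3 - n))) +
      vecMulVec ((2:ℝ)⁻¹ • (p3 - n)) ((t3 * -(12:ℝ)⁻¹) • ((p1 - n) ⨯₃ (p2 - n))) := by
    intro t1 t2 t3
    rw [← smul_add, ← smul_add, ← smul_add, dualF_add_sVec, dualF_add_sVec, dualF_add_sVec,
      smul_smul, smul_smul, smul_smul]
  rcases hσ1 with rfl | rfl <;> rcases hσ2 with rfl | rfl <;> rcases hσ3 with rfl | rfl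
  · linarith
  · linarith
  · -- (1, -1, 1) : d < 0
    have hdneg : d < 0 := by linarith
    have htv : tvol n p1 p2 p3 = -d / 6 := by
      rw [tvol, ← hdd, abs_of_neg hdneg]; try ring
    rw [goal_eq, htv]
    rw [smul_vmv, smul_vmv, smul_vmv] at key ⊢
    calc _ = (-1:ℝ) • ((-1 * -(12:ℝ)⁻¹) • vecMulVec ((2:ℝ)⁻¹ • (p1 - n)) ((p2 - n) ⨯₃ (p3 - n)) +
        (1 * -(12:ℝ)⁻¹) • vecMulVec ((2:ℝ)⁻¹ • (p2 - n)) ((p1 - n) ⨯₃ (p3 - n)) +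
        (-1 * -(12:ℝ)⁻¹) • vecMulVec ((2:ℝ)⁻¹ • (p3 - n)) ((p1 - n) ⨯₃ (p2 - n))) := by
          module
      _ = (-1:ℝ) • ((d / 6 / 4) • (1 : Matrix (Fin 3) (Fin 3) ℝ)) := by rw [key]
      _ = (-d / 6 / 4) • (1 : Matrix (Fin 3) (Fin 3) ℝ) := by module
  · linarith
  · linarith
  · -- (-1, 1, -1) : d > 0
    have hdpos : 0 < d := by linarith
    have htv : tvol n p1 p2 p3 = d / 6 := by
      rw [tvol, ← hdd, abs_of_pos hdpos]
    rw [goal_eq, htv, key]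
  · linarith
  · linarith

end
end

section
/- The barycentric subdivision of a tetrahedron splits it into four regions of equal volume: for each vertex n of a tetrahedron c, the restriction to c of the barycentric dual cell of n has volume |c|/4. -/
open Matrix

noncomputable section

namespace Stmt15Aux

open MeasureTheory Set

def mat (a b c : V3) : Matrix (Fin 3) (Fin 3) ℝ := (Matrix.of ![a, b, c])ᵀ

lemma mulVec_mat (a b c x : V3) : (mat a b c).mulVec x = x 0 • a + x 1 • b + x 2 • c := by
  funext i
  simp [mat, Matrix.mulVec, dotProduct, Fin.sum_univ_three]
  ring

def aff (n a b c : V3) : V3 →ᵃ[ℝ] V3 :=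
  ((AffineEquiv.constVAdd ℝ V3 n).toAffineMap).comp (Matrix.toLin' (mat a b c)).toAffineMap

lemma aff_apply (n a b c x : V3) (i : Fin 3) :
    aff n a b c x i = n i + (x 0 * a i + x 1 * b i + x 2 * c i) := by
  show (n +ᵥ (Matrix.toLin' (mat a b c)) x) i = _
  rw [Matrix.toLin'_apply, mulVec_mat]
  simp [smul_eq_mul]

lemma vol_aff (n a b c : V3) (s : Set V3) :
    volume (aff n a b c '' s) = ENNReal.ofReal |(mat a b c).det| * volume s := by
  have h : ⇑(aff n a b c) = (fun y => n + y) ∘ ⇑(Matrix.toLin' (mat a b c)) := rfl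
  rw [h, Set.image_comp, Set.image_add_left, measure_preimage_add,
    Measure.addHaar_image_linearMap, LinearMap.det_toLin']

lemma aff_hull (n a b c x y z : V3) :
    aff n a b c '' (convexHull ℝ {0, x, y, z}) =
      convexHull ℝ {aff n a b c 0, aff n a b c x, aff n a b c y, aff n a b c z} := by
  rw [AffineMap.image_convexHull]
  congr 1
  simp [Set.image_insert_eq]

lemma lin_hull (a b c : V3) :
    Matrix.toLin' (mat a b c) '' (convexHull ℝ {0, ![1,0,0], ![0,1,0], ![0,0,1]} : Set V3) =
      convexHull ℝ {0, a, b, c} := by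
  rw [LinearMap.image_convexHull]
  congr 1
  simp only [Set.image_insert_eq, Set.image_singleton, Matrix.toLin'_apply, mulVec_mat, map_zero]
  norm_num [Matrix.cons_val_two, Matrix.vecHead, Matrix.vecTail]

lemma convex_le (a b : Fin 3) : Convex ℝ {x : V3 | x a ≤ x b} := by
  have h : IsLinearMap ℝ (fun x : V3 => x a - x b) :=
    ⟨fun x y => by simp [Pi.add_apply]; ring, fun r x => by simp [Pi.smul_apply, smul_eq_mul]; ring⟩
  have := convex_halfSpace_le h 0
  simpa only [sub_nonpos] using this

lemma hull_le (a b : Fin 3) (v1 v2 v3 v4 : V3) (h1 : v1 a ≤ v1 b) (h2 : v2 a ≤ v2 b)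
    (h3 : v3 a ≤ v3 b) (h4 : v4 a ≤ v4 b) :
    convexHull ℝ {v1, v2, v3, v4} ⊆ {x : V3 | x a ≤ x b} := by
  refine convexHull_min ?_ (convex_le a b)
  simp only [Set.insert_subset_iff, Set.singleton_subset_iff, Set.mem_setOf_eq]
  exact ⟨h1, h2, h3, h4⟩

lemma null_hyp (a b : Fin 3) (hab : a ≠ b) : volume {x : V3 | x a = x b} = 0 := by
  have hset : {x : V3 | x a = x b} =
      ((LinearMap.ker ((LinearMap.proj a : V3 →ₗ[ℝ] ℝ) - LinearMap.proj b)) : Set V3) := by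
    ext x
    simp [LinearMap.mem_ker, sub_eq_zero]
  rw [hset]
  refine Measure.addHaar_submodule _ _ ?_
  intro h
  have hx := Submodule.eq_top_iff'.mp h (Pi.single a 1)
  simp [LinearMap.mem_ker, Pi.single_eq_same, Pi.single_eq_of_ne (Ne.symm hab), sub_eq_zero] at hx

lemma aff_injective (n a b c : V3) (hdet : (mat a b c).det ≠ 0) :
    Function.Injective (aff n a b c) := by
  have h1 : Function.Injective (fun y : V3 => n + y) := fun x y h => by
    simpa using h
  have h2 : Function.Injective (Matrix.toLin' (mat a b c)) := by
    have : Function.Injective ((mat a b c).mulVec) :=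
      Matrix.mulVec_injective_iff_isUnit.2 ((Matrix.isUnit_iff_isUnit_det _).2 (isUnit_iff_ne_zero.2 hdet))
    intro x y h
    exact this (by simpa [Matrix.toLin'_apply] using h)
  have h : ⇑(aff n a b c) = (fun y => n + y) ∘ ⇑(Matrix.toLin' (mat a b c)) := rfl
  rw [h]
  exact h1.comp h2

lemma inter_null (n a b c : V3) (hdet : (mat a b c).det ≠ 0) (i j : Fin 3) (hij : i ≠ j)
    (s t : Set V3) (hs : s ⊆ {x : V3 | x i ≤ x j}) (ht : t ⊆ {x : V3 | x j ≤ x i}) :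
    volume (aff n a b c '' s ∩ aff n a b c '' t) = 0 := by
  rw [← Set.image_inter (aff_injective n a b c hdet)]
  have hsub : s ∩ t ⊆ {x : V3 | x i = x j} := fun x hx => le_antisymm (hs hx.1) (ht hx.2)
  refine measure_mono_null (Set.image_mono hsub) ?_
  rw [vol_aff, null_hyp i j hij, mul_zero]

def q1 : V3 := ![2⁻¹, 0, 0]
def q2 : V3 := ![0, 2⁻¹, 0]
def q3 : V3 := ![0, 0, 2⁻¹]
def r12 : V3 := ![3⁻¹, 3⁻¹, 0]
def r13 : V3 := ![3⁻¹, 0, 3⁻¹]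
def r23 : V3 := ![0, 3⁻¹, 3⁻¹]
def cc : V3 := ![4⁻¹, 4⁻¹, 4⁻¹]
def T0 : Set V3 := convexHull ℝ {0, ![1,0,0], ![0,1,0], ![0,0,1]}
def H (u v : V3) : Set V3 := convexHull ℝ {0, u, v, cc}

lemma volH (u v : V3) (h : |(mat u v cc).det| = 24⁻¹) :
    volume (H u v) = ENNReal.ofReal 24⁻¹ * volume T0 := by
  rw [H, ← lin_hull u v cc, Measure.addHaar_image_linearMap, LinearMap.det_toLin', h]
  rfl

lemma cc_apply (i : Fin 3) : cc i = 4⁻¹ := by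
  fin_cases i <;> simp [cc]

lemma H_le (a b : Fin 3) (u v : V3) (hu : u a ≤ u b) (hv : v a ≤ v b) :
    H u v ⊆ {x : V3 | x a ≤ x b} := by
  rw [H]
  exact hull_le a b _ _ _ _ (by norm_num) hu hv (le_of_eq (by rw [cc_apply, cc_apply]))

variable (n p1 p2 p3 : V3)

lemma F0 : aff n (p1-n) (p2-n) (p3-n) 0 = n := by
  funext i; rw [aff_apply]; simp
lemma Fe1 : aff n (p1-n) (p2-n) (p3-n) ![1,0,0] = p1 := by
  funext i; rw [aff_apply]; simp
lemma Fe2 : aff n (p1-n) (p2-n) (p3-n) ![0,1,0] = p2 := by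
  funext i; rw [aff_apply]; simp
lemma Fe3 : aff n (p1-n) (p2-n) (p3-n) ![0,0,1] = p3 := by
  funext i; rw [aff_apply]; simp
lemma Fq1 : aff n (p1-n) (p2-n) (p3-n) q1 = mid n p1 := by
  funext i; rw [aff_apply]; simp [q1, mid]; try ring
lemma Fq2 : aff n (p1-n) (p2-n) (p3-n) q2 = mid n p2 := by
  funext i; rw [aff_apply]; simp [q2, mid]; try ring
lemma Fq3 : aff n (p1-n) (p2-n) (p3-n) q3 = mid n p3 := by
  funext i; rw [aff_apply]; simp [q3, mid]; try ring
lemma Fr12 : aff n (p1-n) (p2-n) (p3-n) r12 = bary3 n p1 p2 := by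
  funext i; rw [aff_apply]; simp [r12, bary3]; try ring
lemma Fr13 : aff n (p1-n) (p2-n) (p3-n) r13 = bary3 n p1 p3 := by
  funext i; rw [aff_apply]; simp [r13, bary3]; try ring
lemma Fr23 : aff n (p1-n) (p2-n) (p3-n) r23 = bary3 n p2 p3 := by
  funext i; rw [aff_apply]; simp [r23, bary3]; try ring
lemma Fcc : aff n (p1-n) (p2-n) (p3-n) cc = ctr n p1 p2 p3 := by
  funext i; rw [aff_apply]; simp [cc, ctr]; try ring

lemma hbig : aff n (p1-n) (p2-n) (p3-n) '' T0 = convexHull ℝ {n, p1, p2, p3} := by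
  rw [T0, aff_hull, F0, Fe1, Fe2, Fe3]
lemma hA1 : aff n (p1-n) (p2-n) (p3-n) '' H q1 r12 =
    convexHull ℝ {n, mid n p1, bary3 n p1 p2, ctr n p1 p2 p3} := by
  rw [H, aff_hull, F0, Fq1, Fr12, Fcc]
lemma hA2 : aff n (p1-n) (p2-n) (p3-n) '' H q1 r13 =
    convexHull ℝ {n, mid n p1, bary3 n p1 p3, ctr n p1 p2 p3} := by
  rw [H, aff_hull, F0, Fq1, Fr13, Fcc]
lemma hA3 : aff n (p1-n) (p2-n) (p3-n) '' H q2 r12 =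
    convexHull ℝ {n, mid n p2, bary3 n p1 p2, ctr n p1 p2 p3} := by
  rw [H, aff_hull, F0, Fq2, Fr12, Fcc]
lemma hA4 : aff n (p1-n) (p2-n) (p3-n) '' H q2 r23 =
    convexHull ℝ {n, mid n p2, bary3 n p2 p3, ctr n p1 p2 p3} := by
  rw [H, aff_hull, F0, Fq2, Fr23, Fcc]
lemma hA5 : aff n (p1-n) (p2-n) (p3-n) '' H q3 r13 =
    convexHull ℝ {n, mid n p3, bary3 n p1 p3, ctr n p1 p2 p3} := by
  rw [H, aff_hull, F0, Fq3, Fr13, Fcc]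
lemma hA6 : aff n (p1-n) (p2-n) (p3-n) '' H q3 r23 =
    convexHull ℝ {n, mid n p3, bary3 n p2 p3, ctr n p1 p2 p3} := by
  rw [H, aff_hull, F0, Fq3, Fr23, Fcc]

-- determinants of the six standard sub-tetrahedra
lemma det1 : |(mat q1 r12 cc).det| = 24⁻¹ := by
  rw [mat, Matrix.det_transpose]; norm_num [q1, r12, cc, Matrix.det_fin_three, Matrix.cons_val_two, Matrix.vecHead, Matrix.vecTail]
lemma det2 : |(mat q1 r13 cc).det| = 24⁻¹ := by
  rw [mat, Matrix.det_transpose]; norm_num [q1, r13, cc, Matrix.det_fin_three, Matrix.cons_val_two, Matrix.vecHead, Matrix.vecTail]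
lemma det3 : |(mat q2 r12 cc).det| = 24⁻¹ := by
  rw [mat, Matrix.det_transpose]; norm_num [q2, r12, cc, Matrix.det_fin_three, Matrix.cons_val_two, Matrix.vecHead, Matrix.vecTail]
lemma det4 : |(mat q2 r23 cc).det| = 24⁻¹ := by
  rw [mat, Matrix.det_transpose]; norm_num [q2, r23, cc, Matrix.det_fin_three, Matrix.cons_val_two, Matrix.vecHead, Matrix.vecTail]
lemma det5 : |(mat q3 r13 cc).det| = 24⁻¹ := by
  rw [mat, Matrix.det_transpose]; norm_num [q3, r13, cc, Matrix.det_fin_three, Matrix.cons_val_two, Matrix.vecHead, Matrix.vecTail]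
lemma det6 : |(mat q3 r23 cc).det| = 24⁻¹ := by
  rw [mat, Matrix.det_transpose]; norm_num [q3, r23, cc, Matrix.det_fin_three, Matrix.cons_val_two, Matrix.vecHead, Matrix.vecTail]

-- halfspace containments
lemma s1a : H q1 r12 ⊆ {x : V3 | x 1 ≤ x 0} := H_le 1 0 q1 r12 (by norm_num [q1, Matrix.cons_val_two, Matrix.vecHead, Matrix.vecTail]) (by norm_num [r12, Matrix.cons_val_two, Matrix.vecHead, Matrix.vecTail])
lemma s1b : H q1 r12 ⊆ {x : V3 | x 2 ≤ x 1} := H_le 2 1 q1 r12 (by norm_num [q1, Matrix.cons_val_two, Matrix.vecHead, Matrix.vecTail]) (by norm_num [r12, Matrix.cons_val_two, Matrix.vecHead, Matrix.vecTail])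
lemma s1c : H q1 r12 ⊆ {x : V3 | x 2 ≤ x 0} := H_le 2 0 q1 r12 (by norm_num [q1, Matrix.cons_val_two, Matrix.vecHead, Matrix.vecTail]) (by norm_num [r12, Matrix.cons_val_two, Matrix.vecHead, Matrix.vecTail])
lemma s2a : H q1 r13 ⊆ {x : V3 | x 1 ≤ x 0} := H_le 1 0 q1 r13 (by norm_num [q1, Matrix.cons_val_two, Matrix.vecHead, Matrix.vecTail]) (by norm_num [r13, Matrix.cons_val_two, Matrix.vecHead, Matrix.vecTail])
lemma s2b : H q1 r13 ⊆ {x : V3 | x 1 ≤ x 2} := H_le 1 2 q1 r13 (by norm_num [q1, Matrix.cons_val_two, Matrix.vecHead, Matrix.vecTail]) (by norm_num [r13, Matrix.cons_val_two, Matrix.vecHead, Matrix.vecTail])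
lemma s2c : H q1 r13 ⊆ {x : V3 | x 2 ≤ x 0} := H_le 2 0 q1 r13 (by norm_num [q1, Matrix.cons_val_two, Matrix.vecHead, Matrix.vecTail]) (by norm_num [r13, Matrix.cons_val_two, Matrix.vecHead, Matrix.vecTail])
lemma s3a : H q2 r12 ⊆ {x : V3 | x 0 ≤ x 1} := H_le 0 1 q2 r12 (by norm_num [q2, Matrix.cons_val_two, Matrix.vecHead, Matrix.vecTail]) (by norm_num [r12, Matrix.cons_val_two, Matrix.vecHead, Matrix.vecTail])
lemma s3b : H q2 r12 ⊆ {x : V3 | x 2 ≤ x 1} := H_le 2 1 q2 r12 (by norm_num [q2, Matrix.cons_val_two, Matrix.vecHead, Matrix.vecTail]) (by norm_num [r12, Matrix.cons_val_two, Matrix.vecHead, Matrix.vecTail])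
lemma s3c : H q2 r12 ⊆ {x : V3 | x 2 ≤ x 0} := H_le 2 0 q2 r12 (by norm_num [q2, Matrix.cons_val_two, Matrix.vecHead, Matrix.vecTail]) (by norm_num [r12, Matrix.cons_val_two, Matrix.vecHead, Matrix.vecTail])
lemma s4a : H q2 r23 ⊆ {x : V3 | x 0 ≤ x 1} := H_le 0 1 q2 r23 (by norm_num [q2, Matrix.cons_val_two, Matrix.vecHead, Matrix.vecTail]) (by norm_num [r23, Matrix.cons_val_two, Matrix.vecHead, Matrix.vecTail])
lemma s4b : H q2 r23 ⊆ {x : V3 | x 2 ≤ x 1} := H_le 2 1 q2 r23 (by norm_num [q2, Matrix.cons_val_two, Matrix.vecHead, Matrix.vecTail]) (by norm_num [r23, Matrix.cons_val_two, Matrix.vecHead, Matrix.vecTail])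
lemma s4c : H q2 r23 ⊆ {x : V3 | x 0 ≤ x 2} := H_le 0 2 q2 r23 (by norm_num [q2, Matrix.cons_val_two, Matrix.vecHead, Matrix.vecTail]) (by norm_num [r23, Matrix.cons_val_two, Matrix.vecHead, Matrix.vecTail])
lemma s5a : H q3 r13 ⊆ {x : V3 | x 1 ≤ x 0} := H_le 1 0 q3 r13 (by norm_num [q3, Matrix.cons_val_two, Matrix.vecHead, Matrix.vecTail]) (by norm_num [r13, Matrix.cons_val_two, Matrix.vecHead, Matrix.vecTail])
lemma s5b : H q3 r13 ⊆ {x : V3 | x 0 ≤ x 2} := H_le 0 2 q3 r13 (by norm_num [q3, Matrix.cons_val_two, Matrix.vecHead, Matrix.vecTail]) (by norm_num [r13, Matrix.cons_val_two, Matrix.vecHead, Matrix.vecTail])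
lemma s5c : H q3 r13 ⊆ {x : V3 | x 1 ≤ x 2} := H_le 1 2 q3 r13 (by norm_num [q3, Matrix.cons_val_two, Matrix.vecHead, Matrix.vecTail]) (by norm_num [r13, Matrix.cons_val_two, Matrix.vecHead, Matrix.vecTail])
lemma s6a : H q3 r23 ⊆ {x : V3 | x 0 ≤ x 1} := H_le 0 1 q3 r23 (by norm_num [q3, Matrix.cons_val_two, Matrix.vecHead, Matrix.vecTail]) (by norm_num [r23, Matrix.cons_val_two, Matrix.vecHead, Matrix.vecTail])
lemma s6b : H q3 r23 ⊆ {x : V3 | x 0 ≤ x 2} := H_le 0 2 q3 r23 (by norm_num [q3, Matrix.cons_val_two, Matrix.vecHead, Matrix.vecTail]) (by norm_num [r23, Matrix.cons_val_two, Matrix.vecHead, Matrix.vecTail])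
lemma s6c : H q3 r23 ⊆ {x : V3 | x 1 ≤ x 2} := H_le 1 2 q3 r23 (by norm_num [q3, Matrix.cons_val_two, Matrix.vecHead, Matrix.vecTail]) (by norm_num [r23, Matrix.cons_val_two, Matrix.vecHead, Matrix.vecTail])

end Stmt15Aux

open Stmt15Aux MeasureTheory Set ENNReal in
/-- the barycentric subdivision of a tetrahedron splits it into four
regions of equal volume: the restriction to `c` of the barycentric dual cell of a
vertex `n` — the union of the six sub-tetrahedra `(n, 𝐛_e, 𝐛_f, 𝐛_c)` of the
24-tetrahedron barycentric subdivision of `c` containing `n` — has volume `|c|/4`. -/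
theorem stmt_15 (n p1 p2 p3 : V3) :
    MeasureTheory.volume
      ((convexHull ℝ {n, mid n p1, bary3 n p1 p2, ctr n p1 p2 p3} : Set V3) ∪
       (convexHull ℝ {n, mid n p1, bary3 n p1 p3, ctr n p1 p2 p3} : Set V3) ∪
       (convexHull ℝ {n, mid n p2, bary3 n p1 p2, ctr n p1 p2 p3} : Set V3) ∪
       (convexHull ℝ {n, mid n p2, bary3 n p2 p3, ctr n p1 p2 p3} : Set V3) ∪
       (convexHull ℝ {n, mid n p3, bary3 n p1 p3, ctr n p1 p2 p3} : Set V3) ∪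
       (convexHull ℝ {n, mid n p3, bary3 n p2 p3, ctr n p1 p2 p3} : Set V3)) =
      MeasureTheory.volume (convexHull ℝ {n, p1, p2, p3} : Set V3) / 4 := by
  classical
  rw [← hbig n p1 p2 p3, ← hA1 n p1 p2 p3, ← hA2 n p1 p2 p3, ← hA3 n p1 p2 p3,
    ← hA4 n p1 p2 p3, ← hA5 n p1 p2 p3, ← hA6 n p1 p2 p3]
  rcases eq_or_ne ((mat (p1-n) (p2-n) (p3-n)).det) 0 with hdet | hdet
  · -- degenerate case: everything has measure zero
    have hz : ∀ s : Set V3, volume (aff n (p1-n) (p2-n) (p3-n) '' s) = 0 := fun s => by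
      rw [vol_aff, hdet]
      simp
    rw [measure_union_null (measure_union_null (measure_union_null (measure_union_null
      (measure_union_null (hz _) (hz _)) (hz _)) (hz _)) (hz _)) (hz _), hz T0,
      ENNReal.zero_div]
  · -- nondegenerate case
    have nm : ∀ u v : V3, NullMeasurableSet (aff n (p1-n) (p2-n) (p3-n) '' H u v) volume := by
      intro u v
      rw [H, aff_hull]
      exact (((Set.toFinite _).isCompact_convexHull (𝕜 := ℝ)).measurableSet).nullMeasurableSet
    -- pairwise a.e. disjointness
    have d12 := inter_null n _ _ _ hdet 2 1 (by decide) _ _ s1b s2b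
    have d13 := inter_null n _ _ _ hdet 1 0 (by decide) _ _ s1a s3a
    have d14 := inter_null n _ _ _ hdet 1 0 (by decide) _ _ s1a s4a
    have d15 := inter_null n _ _ _ hdet 2 0 (by decide) _ _ s1c s5b
    have d16 := inter_null n _ _ _ hdet 2 0 (by decide) _ _ s1c s6b
    have d23 := inter_null n _ _ _ hdet 1 0 (by decide) _ _ s2a s3a
    have d24 := inter_null n _ _ _ hdet 1 0 (by decide) _ _ s2a s4a
    have d25 := inter_null n _ _ _ hdet 2 0 (by decide) _ _ s2c s5b
    have d26 := inter_null n _ _ _ hdet 2 0 (by decide) _ _ s2c s6b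
    have d34 := inter_null n _ _ _ hdet 2 0 (by decide) _ _ s3c s4c
    have d35 := inter_null n _ _ _ hdet 2 1 (by decide) _ _ s3b s5c
    have d36 := inter_null n _ _ _ hdet 2 1 (by decide) _ _ s3b s6c
    have d45 := inter_null n _ _ _ hdet 2 1 (by decide) _ _ s4b s5c
    have d46 := inter_null n _ _ _ hdet 2 1 (by decide) _ _ s4b s6c
    have d56 := inter_null n _ _ _ hdet 1 0 (by decide) _ _ s5a s6a
    rw [measure_union₀ (nm q3 r23)
        ((((AEDisjoint.union_left d16 d26).union_left d36).union_left d46).union_left d56),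
      measure_union₀ (nm q3 r13)
        (((AEDisjoint.union_left d15 d25).union_left d35).union_left d45),
      measure_union₀ (nm q2 r23) ((AEDisjoint.union_left d14 d24).union_left d34),
      measure_union₀ (nm q2 r12) (AEDisjoint.union_left d13 d23),
      measure_union₀ (nm q1 r13) d12]
    have mB : ∀ u v : V3, |(mat u v cc).det| = 24⁻¹ →
        volume (aff n (p1-n) (p2-n) (p3-n) '' H u v) =
          24⁻¹ * volume (aff n (p1-n) (p2-n) (p3-n) '' T0) := by
      intro u v h
      rw [vol_aff, vol_aff, volH u v h,
        show (ENNReal.ofReal 24⁻¹ : ℝ≥0∞) = 24⁻¹ by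
          rw [ENNReal.ofReal_inv_of_pos (by norm_num)]; norm_num]
      ring
    rw [mB q1 r12 det1, mB q1 r13 det2, mB q2 r12 det3, mB q2 r23 det4,
      mB q3 r13 det5, mB q3 r23 det6]
    have h6 : (6 : ℝ≥0∞) * 24⁻¹ = 4⁻¹ := by
      rw [show (24:ℝ≥0∞) = 6 * 4 by norm_num,
        ENNReal.mul_inv (Or.inl (by norm_num)) (Or.inl (by norm_num)), ← mul_assoc,
        ENNReal.mul_inv_cancel (by norm_num) (by norm_num), one_mul]
    calc 24⁻¹ * volume (aff n (p1-n) (p2-n) (p3-n) '' T0)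
          + 24⁻¹ * volume (aff n (p1-n) (p2-n) (p3-n) '' T0)
          + 24⁻¹ * volume (aff n (p1-n) (p2-n) (p3-n) '' T0)
          + 24⁻¹ * volume (aff n (p1-n) (p2-n) (p3-n) '' T0)
          + 24⁻¹ * volume (aff n (p1-n) (p2-n) (p3-n) '' T0)
          + 24⁻¹ * volume (aff n (p1-n) (p2-n) (p3-n) '' T0)
        = (6 * 24⁻¹) * volume (aff n (p1-n) (p2-n) (p3-n) '' T0) := by ring
      _ = volume (aff n (p1-n) (p2-n) (p3-n) '' T0) / 4 := by
          rw [h6, div_eq_mul_inv, mul_comm]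
end
end
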